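/- Let Q and Q′ be symmetric positive semi-definite N × N real matrices and λ > 0. Let α be the minimizer of (1/2) αᵀ (Q + λ⁻¹ I) α − 1ᵀ α over the set {α ∈ ℝ^N : α_i ≥ 0 for all i}, and α′ the corresponding minimizer with Q replaced by Q′. Let λ_min denote the minimum eigenvalue of Q + λ⁻¹ I. If ‖Q′ − Q‖_F ≤ ε < λ_min, then ‖α′ − α‖₂ ≤ ε (λ_min − ε)⁻¹ ‖α‖₂. -/

import Mathlib

open Matrix

/-!
Minimality over the convex orthant gives the first-order conditions
`1 ⬝ (β - α) ≤ (β - α) ⬝ H α` and `1 ⬝ (β - α') ≤ (β - α') ⬝ H' α'` for feasible `β`, where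
`H = Q + λ⁻¹ I` and `H' = Q' + λ⁻¹ I`. Taking `β = α'` and `β = α` and adding gives
`δ ⬝ H' δ ≤ δ ⬝ (H - H') α` for `δ = α' - α`. Writing `H' = H + (Q' - Q)`, the left side is at
least `(λ_min - ε) ‖δ‖²` by the Rayleigh bound for `H` and Cauchy–Schwarz for the perturbation,
while the right side is at most `ε ‖α‖ ‖δ‖`.
-/

theorem nonneg_of_forall_mul_add_sq_mul_nonneg {b k : ℝ}
    (h : ∀ t : ℝ, 0 < t → t ≤ 1 → 0 ≤ t * b + t ^ 2 * k) : 0 ≤ b := by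
  have hcont : Continuous (fun t : ℝ => b + t * k) := by fun_prop
  have hlim := (hcont.tendsto' 0 b (by simp)).mono_left (nhdsWithin_le_nhds (s := Set.Ioi 0))
  refine ge_of_tendsto hlim ?_
  filter_upwards [Ioo_mem_nhdsGT (zero_lt_one' ℝ)] with t ⟨ht0, ht1⟩
  have := h t ht0 ht1.le
  nlinarith

namespace Matrix

variable {ι : Type*} [Fintype ι]

theorem IsHermitian.dotProduct_mulVec_comm {H : Matrix ι ι ℝ} (hH : H.IsHermitian)
    (x y : ι → ℝ) : x ⬝ᵥ (H *ᵥ y) = y ⬝ᵥ (H *ᵥ x) := by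
  have hT : Hᵀ = H := by simpa using hH.eq
  rw [dotProduct_mulVec, ← mulVec_transpose, hT, dotProduct_comm]

theorem abs_dotProduct_mulVec_le (E : Matrix ι ι ℝ) (u v : ι → ℝ) :
    |u ⬝ᵥ (E *ᵥ v)| ≤ √(∑ i, ∑ j, E i j ^ 2) * √(v ⬝ᵥ v) * √(u ⬝ᵥ u) := by
  have hrow : ∀ i, (E *ᵥ v) i ^ 2 ≤ (∑ j, E i j ^ 2) * (v ⬝ᵥ v) := fun i => by
    simpa [mulVec, dotProduct, sq] using Finset.sum_mul_sq_le_sq_mul_sq Finset.univ (E i) v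
  have hEv : (E *ᵥ v) ⬝ᵥ (E *ᵥ v) ≤ (∑ i, ∑ j, E i j ^ 2) * (v ⬝ᵥ v) := by
    simpa [dotProduct, ← sq, Finset.sum_mul] using Finset.sum_le_sum fun i _ => hrow i
  have hcs : (u ⬝ᵥ (E *ᵥ v)) ^ 2 ≤ (u ⬝ᵥ u) * ((E *ᵥ v) ⬝ᵥ (E *ᵥ v)) := by
    simpa [dotProduct, sq] using Finset.sum_mul_sq_le_sq_mul_sq Finset.univ u (E *ᵥ v)
  have hu : 0 ≤ u ⬝ᵥ u := by simpa using dotProduct_self_star_nonneg u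
  have hv : 0 ≤ v ⬝ᵥ v := by simpa using dotProduct_self_star_nonneg v
  rw [← Real.sqrt_mul (by positivity), ← Real.sqrt_mul (by positivity)]
  exact Real.abs_le_sqrt (hcs.trans (by nlinarith [mul_le_mul_of_nonneg_left hEv hu]))

variable [DecidableEq ι]

theorem IsHermitian.posSemidef_sub_smul_one {A : Matrix ι ι ℝ} (hA : A.IsHermitian) {c : ℝ}
    (hc : ∀ i, c ≤ hA.eigenvalues i) : (A - c • 1).PosSemidef := by
  set U := hA.eigenvectorUnitary
  have hdiag : diagonal (fun i => hA.eigenvalues i - c) =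
      diagonal (RCLike.ofReal ∘ hA.eigenvalues) - c • 1 := by
    ext i j
    by_cases h : i = j <;> simp [diagonal, h]
  have hconj : A - c • 1 = (U : Matrix ι ι ℝ) * diagonal (fun i => hA.eigenvalues i - c) *
      star (U : Matrix ι ι ℝ) := by
    conv_lhs => rw [hA.spectral_theorem, Unitary.conjStarAlgAut_apply]
    rw [hdiag, mul_sub, sub_mul, mul_smul_comm, mul_one, smul_mul_assoc,
      Unitary.mul_star_self_of_mem U.2]
  rw [hconj, Unitary.isUnit_coe.posSemidef_star_right_conjugate_iff, posSemidef_diagonal_iff]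
  exact fun i => sub_nonneg.mpr (hc i)

theorem IsHermitian.iInf_eigenvalues_mul_dotProduct_self_le {A : Matrix ι ι ℝ}
    (hA : A.IsHermitian) (x : ι → ℝ) :
    (⨅ i, hA.eigenvalues i) * (x ⬝ᵥ x) ≤ x ⬝ᵥ (A *ᵥ x) := by
  have hpsd := hA.posSemidef_sub_smul_one fun i => ciInf_le (Set.finite_range _).bddBelow i
  have := hpsd.dotProduct_mulVec_nonneg x
  simp only [star_trivial, sub_mulVec, smul_mulVec, one_mulVec, dotProduct_sub,
    dotProduct_smul, smul_eq_mul] at this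
  linarith

end Matrix

section QuadraticObjective

variable {ι : Type*} [Fintype ι]

noncomputable def quadraticObjective (H : Matrix ι ι ℝ) (c x : ι → ℝ) : ℝ :=
  (1 / 2) * (x ⬝ᵥ (H *ᵥ x)) - c ⬝ᵥ x

theorem quadraticObjective_add_smul {H : Matrix ι ι ℝ} (hH : H.IsHermitian) (c a d : ι → ℝ)
    (t : ℝ) :
    quadraticObjective H c (a + t • d) = quadraticObjective H c a +
      t * (d ⬝ᵥ (H *ᵥ a) - c ⬝ᵥ d) + t ^ 2 * ((1 / 2) * (d ⬝ᵥ (H *ᵥ d))) := by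
  simp only [quadraticObjective, mulVec_add, mulVec_smul, dotProduct_add, add_dotProduct,
    dotProduct_smul, smul_dotProduct, smul_eq_mul, hH.dotProduct_mulVec_comm a d]
  ring

variable {H H' : Matrix ι ι ℝ} {c a a' : ι → ℝ} {s : Set (ι → ℝ)}

theorem IsMinOn.dotProduct_sub_le_dotProduct_mulVec (hH : H.IsHermitian) (hs : Convex ℝ s)
    (ha : a ∈ s) (hmin : IsMinOn (quadraticObjective H c) s a) {y : ι → ℝ} (hy : y ∈ s) :
    c ⬝ᵥ (y - a) ≤ (y - a) ⬝ᵥ (H *ᵥ a) := by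
  suffices 0 ≤ (y - a) ⬝ᵥ (H *ᵥ a) - c ⬝ᵥ (y - a) by linarith
  refine nonneg_of_forall_mul_add_sq_mul_nonneg
    (k := (1 / 2) * ((y - a) ⬝ᵥ (H *ᵥ (y - a)))) fun t ht0 ht1 => ?_
  have hmem : a + t • (y - a) ∈ s := by
    simpa [add_sub_cancel] using hs.add_smul_sub_mem ha hy ⟨ht0.le, ht1⟩
  have := isMinOn_iff.mp hmin _ hmem
  rw [quadraticObjective_add_smul hH] at this
  linarith

theorem IsMinOn.dotProduct_mulVec_sub_le (hH : H.IsHermitian) (hH' : H'.IsHermitian)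
    (hs : Convex ℝ s) (ha : a ∈ s) (ha' : a' ∈ s) (hmin : IsMinOn (quadraticObjective H c) s a)
    (hmin' : IsMinOn (quadraticObjective H' c) s a') :
    (a' - a) ⬝ᵥ (H' *ᵥ (a' - a)) ≤ (a' - a) ⬝ᵥ ((H - H') *ᵥ a) := by
  have h := hmin.dotProduct_sub_le_dotProduct_mulVec hH hs ha ha'
  have h' := hmin'.dotProduct_sub_le_dotProduct_mulVec hH' hs ha' ha
  rw [← neg_sub a' a, dotProduct_neg, neg_dotProduct] at h'
  rw [mulVec_sub, sub_mulVec, dotProduct_sub, dotProduct_sub]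
  linarith

theorem sqrt_dotProduct_sub_le_of_isMinOn_quadraticObjective [DecidableEq ι]
    (hH : H.IsHermitian) (hH' : H'.IsHermitian) (hs : Convex ℝ s) (ha : a ∈ s) (ha' : a' ∈ s)
    (hmin : IsMinOn (quadraticObjective H c) s a)
    (hmin' : IsMinOn (quadraticObjective H' c) s a') {ε : ℝ}
    (hE : √(∑ i, ∑ j, (H' - H) i j ^ 2) ≤ ε) (hε : ε < ⨅ i, hH.eigenvalues i) :
    √((a' - a) ⬝ᵥ (a' - a)) ≤ ε * ((⨅ i, hH.eigenvalues i) - ε)⁻¹ * √(a ⬝ᵥ a) := by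
  have hmain := hmin.dotProduct_mulVec_sub_le hH hH' hs ha ha' hmin'
  have hlow := hH.iInf_eigenvalues_mul_dotProduct_self_le (a' - a)
  set m := ⨅ i, hH.eigenvalues i
  set d := a' - a
  set nd := √(d ⬝ᵥ d)
  set na := √(a ⬝ᵥ a)
  have hnd0 : 0 ≤ nd := Real.sqrt_nonneg _
  have hnd : nd ^ 2 = d ⬝ᵥ d := Real.sq_sqrt (by simpa using dotProduct_self_star_nonneg d)
  have hε0 : 0 ≤ ε := (Real.sqrt_nonneg _).trans hE
  have hsplit : d ⬝ᵥ (H' *ᵥ d) = d ⬝ᵥ (H *ᵥ d) + d ⬝ᵥ ((H' - H) *ᵥ d) := by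
    rw [sub_mulVec, dotProduct_sub]
    ring
  have hflip : d ⬝ᵥ ((H - H') *ᵥ a) = -(d ⬝ᵥ ((H' - H) *ᵥ a)) := by
    rw [← neg_sub, neg_mulVec, dotProduct_neg]
  have hEa : |d ⬝ᵥ ((H' - H) *ᵥ a)| ≤ ε * na * nd :=
    (abs_dotProduct_mulVec_le (H' - H) d a).trans (by gcongr)
  have hEd : |d ⬝ᵥ ((H' - H) *ᵥ d)| ≤ ε * nd ^ 2 :=
    (abs_dotProduct_mulVec_le (H' - H) d d).trans (by rw [sq, ← mul_assoc]; gcongr)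
  have hquad : (m - ε) * nd ^ 2 ≤ ε * na * nd := by
    rw [← hnd] at hlow
    linarith [neg_abs_le (d ⬝ᵥ ((H' - H) *ᵥ a)), neg_abs_le (d ⬝ᵥ ((H' - H) *ᵥ d))]
  have hmε : 0 < m - ε := sub_pos.mpr hε
  rcases hnd0.eq_or_lt with hzero | hpos
  · rw [← hzero]
    positivity
  · rw [mul_right_comm, ← div_eq_mul_inv, le_div_iff₀ hmε]
    nlinarith

end QuadraticObjective

theorem svm_dual_quadratic_program_perturbation_general (N : ℕ)
    (Q Q' : Matrix (Fin N) (Fin N) ℝ)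
    (hQ' : Q'.PosSemidef)
    (lam : ℝ)
    (hH : (Q + lam⁻¹ • (1 : Matrix (Fin N) (Fin N) ℝ)).IsHermitian)
    (α α' : Fin N → ℝ)
    (hαpos : ∀ i, 0 ≤ α i)
    (hαmin : ∀ β : Fin N → ℝ, (∀ i, 0 ≤ β i) →
      (1 / 2) * (α ⬝ᵥ ((Q + lam⁻¹ • 1) *ᵥ α)) - (∑ i, α i)
        ≤ (1 / 2) * (β ⬝ᵥ ((Q + lam⁻¹ • 1) *ᵥ β)) - (∑ i, β i))
    (hα'pos : ∀ i, 0 ≤ α' i)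
    (hα'min : ∀ β : Fin N → ℝ, (∀ i, 0 ≤ β i) →
      (1 / 2) * (α' ⬝ᵥ ((Q' + lam⁻¹ • 1) *ᵥ α')) - (∑ i, α' i)
        ≤ (1 / 2) * (β ⬝ᵥ ((Q' + lam⁻¹ • 1) *ᵥ β)) - (∑ i, β i))
    (ε : ℝ)
    (hQQ' : Real.sqrt (∑ i, ∑ j, |Q' i j - Q i j| ^ 2) ≤ ε)
    (hε : ε < ⨅ i, hH.eigenvalues i) :
    Real.sqrt (∑ i, |α' i - α i| ^ 2)
      ≤ ε * ((⨅ i, hH.eigenvalues i) - ε)⁻¹ * Real.sqrt (∑ i, |α i| ^ 2) := by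
  have hH' : (Q' + lam⁻¹ • (1 : Matrix (Fin N) (Fin N) ℝ)).IsHermitian :=
    hQ'.isHermitian.add (isHermitian_one.smul (IsSelfAdjoint.all _))
  have hmin : IsMinOn (quadraticObjective (Q + lam⁻¹ • 1) 1) (Set.Ici 0) α :=
    isMinOn_iff.mpr fun β hβ => by simpa [quadraticObjective, one_dotProduct] using hαmin β hβ
  have hmin' : IsMinOn (quadraticObjective (Q' + lam⁻¹ • 1) 1) (Set.Ici 0) α' :=
    isMinOn_iff.mpr fun β hβ => by simpa [quadraticObjective, one_dotProduct] using hα'min β hβ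
  have hE : √(∑ i, ∑ j, ((Q' + lam⁻¹ • 1) - (Q + lam⁻¹ • 1)) i j ^ 2) ≤ ε := by
    rw [add_sub_add_right_eq_sub]
    simpa only [Matrix.sub_apply, sq_abs] using hQQ'
  have hnorm (x : Fin N → ℝ) : √(x ⬝ᵥ x) = √(∑ i, |x i| ^ 2) := by
    simp only [dotProduct, ← sq, sq_abs]
  simpa only [hnorm, Pi.sub_apply] using sqrt_dotProduct_sub_le_of_isMinOn_quadraticObjective
    hH hH' (convex_Ici 0) hαpos hα'pos hmin hmin' hE hε

/-- Robustness of the SVM dual quadratic program: if the perturbed matrix `Q′`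
satisfies `‖Q′ − Q‖_F ≤ ε < λ_min(Q + λ⁻¹ I)`, then the minimizers satisfy
`‖α′ − α‖₂ ≤ ε (λ_min − ε)⁻¹ ‖α‖₂`. -/
theorem svm_dual_quadratic_program_perturbation (N : ℕ) (hN : 0 < N)
    (Q Q' : Matrix (Fin N) (Fin N) ℝ)
    (hQ : Q.PosSemidef) (hQ' : Q'.PosSemidef)
    (lam : ℝ) (hlam : 0 < lam)
    (hH : (Q + lam⁻¹ • (1 : Matrix (Fin N) (Fin N) ℝ)).IsHermitian)
    (α α' : Fin N → ℝ)
    (hαpos : ∀ i, 0 ≤ α i)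
    (hαmin : ∀ β : Fin N → ℝ, (∀ i, 0 ≤ β i) →
      (1 / 2) * (α ⬝ᵥ ((Q + lam⁻¹ • 1) *ᵥ α)) - (∑ i, α i)
        ≤ (1 / 2) * (β ⬝ᵥ ((Q + lam⁻¹ • 1) *ᵥ β)) - (∑ i, β i))
    (hα'pos : ∀ i, 0 ≤ α' i)
    (hα'min : ∀ β : Fin N → ℝ, (∀ i, 0 ≤ β i) →
      (1 / 2) * (α' ⬝ᵥ ((Q' + lam⁻¹ • 1) *ᵥ α')) - (∑ i, α' i)
        ≤ (1 / 2) * (β ⬝ᵥ ((Q' + lam⁻¹ • 1) *ᵥ β)) - (∑ i, β i))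
    (ε : ℝ)
    (hQQ' : Real.sqrt (∑ i, ∑ j, |Q' i j - Q i j| ^ 2) ≤ ε)
    (hε : ε < ⨅ i, hH.eigenvalues i) :
    Real.sqrt (∑ i, |α' i - α i| ^ 2)
      ≤ ε * ((⨅ i, hH.eigenvalues i) - ε)⁻¹ * Real.sqrt (∑ i, |α i| ^ 2) :=
  svm_dual_quadratic_program_perturbation_general N Q Q' hQ' lam hH α α' hαpos hαmin hα'pos hα'min ε
    hQQ' hε
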